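/- Let P be a register protocol with initial value d0 and target qf, and suppose Post*(↑{⟨q0, d0⟩}) = ↑{θ_1, …, θ_n} and Pre*([qf]) = ↑{η_1, …, η_m}. For i ∈ [1; n] and q in the support of θ_i, let d_{i,q} = max{ |st(η_j)(q) − st(θ_i)(q)| : 1 ≤ j ≤ m and supp(st(θ_i)) = supp(st(η_j)) } (with max ∅ = 0). If Post*(↑{⟨q0, d0⟩}) is included in Pre*([qf]) modulo single-state incrementation, then k0 = max_{1 ≤ i ≤ n} ( |st(θ_i)| + Σ_{q ∈ supp(θ_i)} d_{i,q} ) is a positive cut-off: for every h ≥ k0, Post*({⟨q0^h, d0⟩}) ⊆ Pre*([qf]) (equivalently, qf is reached almost surely in the system of h processes). -/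

import Mathlib

/-- Operation type of a register protocol: read or write. -/
inductive Op : Type
  | R : Op
  | W : Op
deriving DecidableEq

instance instFintypeOp : Fintype Op :=
  ⟨{Op.R, Op.W}, fun x => by cases x <;> simp⟩

/-- A location has at least one outgoing transition. -/
def Nonblock {Q D : Type*} (T : Set (Q × Op × D × Q)) : Prop :=
  ∀ q : Q, ∃ op d q', (q, op, d, q') ∈ T

/-- Whenever a read transition exists from `q`, reads of every datum are enabled in `q`. -/
def ReadTotal {Q D : Type*} (T : Set (Q × Op × D × Q)) : Prop :=
  ∀ q d' q', (q, Op.R, d', q') ∈ T → ∀ d : D, ∃ qd, (q, Op.R, d, qd) ∈ T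

/-- One step of the distributed system associated with transition set `T`:
a configuration is a pair of a finite multiset of locations and a register datum. -/
def IsStep {Q D : Type*} [DecidableEq Q] (T : Set (Q × Op × D × Q)) :
    Multiset Q × D → Multiset Q × D → Prop := fun γ γ' =>
  ∃ q op d'' q', (q, op, d'', q') ∈ T ∧ q ∈ γ.1 ∧
    γ'.1 = γ.1 - {q} + {q'} ∧
    ((op = Op.R ∧ γ.2 = d'' ∧ γ'.2 = d'') ∨ (op = Op.W ∧ γ'.2 = d''))

/-- Reachability: reflexive-transitive closure of the step relation. -/
def Reach {Q D : Type*} [DecidableEq Q] (T : Set (Q × Op × D × Q)) :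
    Multiset Q × D → Multiset Q × D → Prop :=
  Relation.ReflTransGen (IsStep T)

/-- `PostStar T S` is the set of configurations reachable from some configuration of `S`. -/
def PostStar {Q D : Type*} [DecidableEq Q] (T : Set (Q × Op × D × Q))
    (S : Set (Multiset Q × D)) : Set (Multiset Q × D) :=
  {γ' | ∃ γ ∈ S, Reach T γ γ'}

/-- `PreStar T S` is the set of configurations from which some configuration of `S`
is reachable. -/
def PreStar {Q D : Type*} [DecidableEq Q] (T : Set (Q × Op × D × Q))
    (S : Set (Multiset Q × D)) : Set (Multiset Q × D) :=
  {γ | ∃ γ' ∈ S, Reach T γ γ'}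

/-- `[qf]`: configurations containing at least one process in location `qf`. -/
def TargetSet {Q D : Type*} [DecidableEq Q] (qf : Q) : Set (Multiset Q × D) :=
  {γ | 0 < γ.1.count qf}

/-- The order `⪯` on configurations: same register content, same support,
and componentwise smaller multiset. -/
def ConfLE {Q D : Type*} [DecidableEq Q] (γ γ' : Multiset Q × D) : Prop :=
  γ.2 = γ'.2 ∧ γ.1.toFinset = γ'.1.toFinset ∧ γ.1 ≤ γ'.1

/-- Upward closure of a set of configurations with respect to `⪯`. -/
def UpSet {Q D : Type*} [DecidableEq Q] (B : Set (Multiset Q × D)) :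
    Set (Multiset Q × D) :=
  {γ' | ∃ γ ∈ B, ConfLE γ γ'}

/-- `Δ` is included in `Δ'` modulo single-state incrementation. -/
def IncModSSI {Q D : Type*} [DecidableEq Q] (Δ Δ' : Set (Multiset Q × D)) : Prop :=
  ∀ γ ∈ Δ, ∀ q ∈ γ.1.toFinset, ∃ k : ℕ, (γ.1 + Multiset.replicate k q, γ.2) ∈ Δ'


/-!
Steps preserve the number of processes and `k0 ≥ |θ_i| ≥ 1`, so every configuration reachable from
`⟨q0^h, d0⟩` lies above some minimal element `θ_i` of `Post*(↑{⟨q0, d0⟩})` and has `h` processes.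
If `h ≥ |θ_i| + ∑_q d_{i,q}`, pigeonhole gives a location `q` where it exceeds `θ_i` by at least
`d_{i,q}`. Incrementing `θ_i` at `q` reaches `Pre*([qf]) = ↑{η_j}`, and the `η_j` below `θ_i + q^k`
has the support of `θ_i`, so it exceeds `θ_i` at `q` by at most `d_{i,q}` and lies below `θ_i`
elsewhere; hence it lies below our configuration, which is therefore in `Pre*([qf])`.
-/

section Configurations

variable {Q D : Type*} [DecidableEq Q] {T : Set (Q × Op × D × Q)}

theorem IsStep.card_eq {γ γ' : Multiset Q × D} (h : IsStep T γ γ') :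
    Multiset.card γ'.1 = Multiset.card γ.1 := by
  obtain ⟨q, -, -, q', -, hq, hγ', -⟩ := h
  rw [hγ', Multiset.card_add, Multiset.card_sub (Multiset.singleton_le.mpr hq),
    Multiset.card_singleton]
  exact Nat.sub_add_cancel (Multiset.card_pos_iff_exists_mem.mpr ⟨q, hq⟩)

theorem Reach.card_eq {γ γ' : Multiset Q × D} (h : Reach T γ γ') :
    Multiset.card γ'.1 = Multiset.card γ.1 := by
  induction h with
  | refl => rfl
  | tail _ hs ih => rw [hs.card_eq, ih]

theorem ConfLE.refl (γ : Multiset Q × D) : ConfLE γ γ :=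
  ⟨rfl, rfl, le_rfl⟩

theorem mem_upSet_of_mem {B : Set (Multiset Q × D)} {γ : Multiset Q × D} (h : γ ∈ B) :
    γ ∈ UpSet B :=
  ⟨γ, h, ConfLE.refl γ⟩

theorem subset_postStar (S : Set (Multiset Q × D)) : S ⊆ PostStar T S :=
  fun γ h => ⟨γ, h, Relation.ReflTransGen.refl⟩

theorem card_le_of_mem_postStar_upSet_singleton {x γ : Multiset Q × D}
    (h : γ ∈ PostStar T (UpSet {x})) : Multiset.card x.1 ≤ Multiset.card γ.1 := by
  obtain ⟨γ₀, ⟨_, rfl, -, -, hle⟩, hr⟩ := h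
  exact hr.card_eq ▸ Multiset.card_le_card hle

theorem replicate_mem_upSet_singleton {h : ℕ} (hh : 0 < h) (q : Q) (d : D) :
    (Multiset.replicate h q, d) ∈ UpSet {(({q} : Multiset Q), d)} := by
  refine ⟨_, rfl, rfl, ?_, ?_⟩
  · simp [hh.ne']
  · simpa using Multiset.replicate_le_replicate q |>.mpr hh

end Configurations

namespace Multiset

variable {α : Type*} [DecidableEq α]

theorem exists_count_add_le_count {μ ν : Multiset α} (f : α → ℕ) (hν : ν ≠ 0)
    (hsupp : μ.toFinset ⊆ ν.toFinset)
    (hcard : card ν + ∑ a ∈ ν.toFinset, f a ≤ card μ) :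
    ∃ a ∈ ν.toFinset, ν.count a + f a ≤ μ.count a := by
  by_contra! hlt
  have hsum := Finset.sum_le_sum fun a ha => Nat.add_one_le_of_lt (hlt a ha)
  rw [Finset.sum_add_distrib, Finset.sum_add_distrib, Finset.sum_const, smul_eq_mul, mul_one,
    toFinset_sum_count_eq, sum_count_eq_card fun a ha => hsupp (mem_toFinset.mpr ha)] at hsum
  have : 0 < ν.toFinset.card := Finset.card_pos.mpr (toFinset_nonempty.mpr hν)
  omega

theorem toFinset_add_replicate_of_mem {μ : Multiset α} {a : α} (ha : a ∈ μ) (k : ℕ) :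
    (μ + replicate k a).toFinset = μ.toFinset := by
  rw [toFinset_add, Finset.union_eq_left]
  intro b hb
  rw [mem_toFinset, eq_of_mem_replicate (mem_toFinset.mp hb)]
  exact ha

end Multiset

section CutOff

variable {Q D : Type*} [DecidableEq Q] {m : ℕ}

/-- `d_{i,q}` of the cut-off bound, for `θ = θ_i`. -/
def supportGap (θ : Multiset Q × D) (η : Fin m → Multiset Q × D) (q : Q) : ℕ :=
  (Finset.univ.filter fun j => θ.1.toFinset = (η j).1.toFinset).sup
    fun j => Nat.dist ((η j).1.count q) (θ.1.count q)

theorem count_le_count_add_supportGap {θ : Multiset Q × D} {η : Fin m → Multiset Q × D}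
    {j : Fin m} (hj : θ.1.toFinset = (η j).1.toFinset) (q : Q) :
    (η j).1.count q ≤ θ.1.count q + supportGap θ η q := by
  have : Nat.dist ((η j).1.count q) (θ.1.count q) ≤ supportGap θ η q :=
    Finset.le_sup (f := fun j => Nat.dist ((η j).1.count q) (θ.1.count q))
      (Finset.mem_filter.mpr ⟨Finset.mem_univ j, hj⟩)
  unfold Nat.dist at this
  omega

theorem ConfLE.of_le_add_replicate {η θ γ : Multiset Q × D} {q : Q} {k : ℕ} (hq : q ∈ θ.1)
    (hη : ConfLE η (θ.1 + Multiset.replicate k q, θ.2)) (hθ : ConfLE θ γ)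
    (hcount : η.1.count q ≤ γ.1.count q) : ConfLE η γ := by
  obtain ⟨hηd, hηs, hηle⟩ := hη
  obtain ⟨hθd, hθs, hθle⟩ := hθ
  refine ⟨hηd.trans hθd, ?_, Multiset.le_iff_count.mpr fun a => ?_⟩
  · rw [hηs, Multiset.toFinset_add_replicate_of_mem hq, hθs]
  · obtain rfl | hne := eq_or_ne a q
    · exact hcount
    · have h₁ := Multiset.count_le_of_le a hηle
      have h₂ := Multiset.count_le_of_le a hθle
      rw [Multiset.count_add, Multiset.count_replicate, if_neg hne.symm, add_zero] at h₁
      exact h₁.trans h₂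

theorem mem_upSet_range_of_incModSSI {θ γ : Multiset Q × D} {η : Fin m → Multiset Q × D}
    (hinc : ∀ q ∈ θ.1.toFinset, ∃ k : ℕ,
      (θ.1 + Multiset.replicate k q, θ.2) ∈ UpSet (Set.range η))
    (hθγ : ConfLE θ γ) (hθ : θ.1 ≠ 0)
    (hcard : Multiset.card θ.1 + ∑ q ∈ θ.1.toFinset, supportGap θ η q ≤ Multiset.card γ.1) :
    γ ∈ UpSet (Set.range η) := by
  obtain ⟨q, hqθ, hqγ⟩ := Multiset.exists_count_add_le_count _ hθ hθγ.2.1.symm.subset hcard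
  have hq : q ∈ θ.1 := Multiset.mem_toFinset.mp hqθ
  obtain ⟨k, _, ⟨j, rfl⟩, hηj⟩ := hinc q hqθ
  have hsupp : θ.1.toFinset = (η j).1.toFinset := by
    rw [hηj.2.1, Multiset.toFinset_add_replicate_of_mem hq]
  exact ⟨η j, ⟨j, rfl⟩, hηj.of_le_add_replicate hq hθγ
    ((count_le_count_add_supportGap hsupp q).trans hqγ)⟩

end CutOff

theorem stmt_8_general {Q D : Type*} [DecidableEq Q]
    (T : Set (Q × Op × D × Q))
    (q0 qf : Q) (d0 : D) (n m : ℕ)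
    (θ : Fin n → Multiset Q × D) (η : Fin m → Multiset Q × D)
    (hpost : PostStar T (UpSet {(({q0} : Multiset Q), d0)}) = UpSet (Set.range θ))
    (hpre : PreStar T (TargetSet qf) = UpSet (Set.range η))
    (hinc : IncModSSI (PostStar T (UpSet {(({q0} : Multiset Q), d0)}))
        (PreStar T (TargetSet qf))) :
    ∀ h : ℕ,
      (Finset.univ.sup fun i : Fin n =>
        Multiset.card (θ i).1 + ∑ q ∈ (θ i).1.toFinset,
          (Finset.univ.filter
              (fun j : Fin m => (θ i).1.toFinset = (η j).1.toFinset)).sup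
            (fun j : Fin m => Nat.dist ((η j).1.count q) ((θ i).1.count q))) ≤ h →
      PostStar T {(Multiset.replicate h q0, d0)} ⊆ PreStar T (TargetSet qf) := by
  intro h hk
  have hbound (i : Fin n) :
      Multiset.card (θ i).1 + ∑ q ∈ (θ i).1.toFinset, supportGap (θ i) η q ≤ h :=
    Finset.sup_le_iff.mp hk i (Finset.mem_univ i)
  have hθpost (i : Fin n) : θ i ∈ PostStar T (UpSet {(({q0} : Multiset Q), d0)}) :=
    hpost ▸ mem_upSet_of_mem (Set.mem_range_self i)
  have hθpos (i : Fin n) : 0 < Multiset.card (θ i).1 :=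
    card_le_of_mem_postStar_upSet_singleton (hθpost i)
  obtain ⟨_, ⟨i₀, rfl⟩, -⟩ : (({q0} : Multiset Q), d0) ∈ UpSet (Set.range θ) :=
    hpost ▸ subset_postStar _ (mem_upSet_of_mem rfl)
  have hh : 0 < h := (hθpos i₀).trans_le ((Nat.le_add_right _ _).trans (hbound i₀))
  rintro γ ⟨_, rfl, hr⟩
  obtain ⟨_, ⟨i, rfl⟩, hθγ⟩ : γ ∈ UpSet (Set.range θ) :=
    hpost ▸ ⟨_, replicate_mem_upSet_singleton hh q0 d0, hr⟩
  rw [hpre]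
  refine mem_upSet_range_of_incModSSI (fun q hq => hpre ▸ hinc _ (hθpost i) q hq) hθγ
    (Multiset.card_pos.mp (hθpos i)) ?_
  rw [hr.card_eq, Multiset.card_replicate]
  exact hbound i

/-- if `Post*(↑{⟨q0,d0⟩}) = ↑{θ_1,…,θ_n}` is included in
`Pre*([qf]) = ↑{η_1,…,η_m}` modulo single-state incrementation, then
`k0 = max_i (|st(θ_i)| + Σ_{q ∈ supp(θ_i)} d_{i,q})` is a positive cut-off,
where `d_{i,q} = max{ |st(η_j)(q) − st(θ_i)(q)| : supp(st(θ_i)) = supp(st(η_j)) }`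
(with `max ∅ = 0`). -/
theorem stmt_8 {Q D : Type*} [DecidableEq Q]
    (T : Set (Q × Op × D × Q)) (hnb : Nonblock T) (hrt : ReadTotal T)
    (q0 qf : Q) (d0 : D) (n m : ℕ)
    (θ : Fin n → Multiset Q × D) (η : Fin m → Multiset Q × D)
    (hpost : PostStar T (UpSet {(({q0} : Multiset Q), d0)}) = UpSet (Set.range θ))
    (hpre : PreStar T (TargetSet qf) = UpSet (Set.range η))
    (hinc : IncModSSI (PostStar T (UpSet {(({q0} : Multiset Q), d0)}))
        (PreStar T (TargetSet qf))) :
    ∀ h : ℕ,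
      (Finset.univ.sup fun i : Fin n =>
        Multiset.card (θ i).1 + ∑ q ∈ (θ i).1.toFinset,
          (Finset.univ.filter
              (fun j : Fin m => (θ i).1.toFinset = (η j).1.toFinset)).sup
            (fun j : Fin m => Nat.dist ((η j).1.count q) ((θ i).1.count q))) ≤ h →
      PostStar T {(Multiset.replicate h q0, d0)} ⊆ PreStar T (TargetSet qf) :=
  stmt_8_general T q0 qf d0 n m θ η hpost hpre hinc
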